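/- Let T > 0 and let Ψ₁, Ψ₂ : [0,∞)×[0,T] → ℂ be continuously differentiable with ∂ₜΨ₁ + ∂ₓΨ₁ = 0 and ∂ₜΨ₂ − ∂ₓΨ₂ = 0 (the massless Dirac system i ∂ₜΨ₁ = −i ∂ₓΨ₁, i ∂ₜΨ₂ = i ∂ₓΨ₂). Assume that for l = 1,2, Ψₗ(·,s) and ∂ₓΨₗ(·,s) are integrable on [0,∞) for each s ∈ [0,T], Ψₗ(x,s) → 0 as x → +∞, and |∂ₜΨₗ(x,s)| is dominated uniformly for s ∈ [0,T] by an integrable function of x. Then for every k ∈ ℂ with Im k ≤ 0 and every t ∈ [0,T]: (i) ∫_0^∞ e^{−ikx} Ψ₁(x,0) dx − e^{ikt} ∫_0^∞ e^{−ikx} Ψ₁(x,t) dx + ∫_0^t e^{iks} Ψ₁(0,s) ds = 0; and (ii) ∫_0^∞ e^{−ikx} Ψ₂(x,0) dx − e^{−ikt} ∫_0^∞ e^{−ikx} Ψ₂(x,t) dx − ∫_0^t e^{−iks} Ψ₂(0,s) ds = 0. -/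

import Mathlib

/-!
For a solution of `∂ₜΨ + ε ∂ₓΨ = 0` put `F(s) = ∫₀^∞ e^{-ikx} Ψ(x,s) dx`. Differentiating under
the integral (the time derivative is dominated by `g`) and integrating by parts once in `x` (the
boundary term at `∞` vanishes because `|e^{-ikx}| ≤ 1` when `Im k ≤ 0`) gives
`F' = ε Ψ(0,·) - ε i k F`. Hence `(e^{εiks} F(s))' = ε e^{εiks} Ψ(0,s)`, and integrating over
`[0,t]` yields the global relation; the two components are the cases `ε = 1` and `ε = -1`.
-/

open MeasureTheory Filter intervalIntegral Set Complex Topology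

section Slices

variable {𝕜 E F G : Type*} [NontriviallyNormedField 𝕜] [NormedAddCommGroup E] [NormedSpace 𝕜 E]
  [NormedAddCommGroup F] [NormedSpace 𝕜 F] [NormedAddCommGroup G] [NormedSpace 𝕜 G]
  {f : E × F → G} {s : Set E} {t : Set F}

theorem DifferentiableOn.comp_prodMk_const_right (hf : DifferentiableOn 𝕜 f (s ×ˢ t))
    {b : F} (hb : b ∈ t) : DifferentiableOn 𝕜 (fun a => f (a, b)) s :=
  hf.comp (differentiableOn_id.prodMk (differentiableOn_const b)) fun _ ha => mk_mem_prod ha hb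

theorem DifferentiableOn.comp_prodMk_const_left (hf : DifferentiableOn 𝕜 f (s ×ˢ t))
    {a : E} (ha : a ∈ s) : DifferentiableOn 𝕜 (fun b => f (a, b)) t :=
  hf.comp ((differentiableOn_const a).prodMk differentiableOn_id) fun _ hb => mk_mem_prod ha hb

end Slices

theorem DifferentiableOn.hasDerivAt_derivWithin {𝕜 F : Type*} [NontriviallyNormedField 𝕜]
    [NormedAddCommGroup F] [NormedSpace 𝕜 F] {f : 𝕜 → F} {s : Set 𝕜} {x : 𝕜}
    (hf : DifferentiableOn 𝕜 f s) (hs : s ∈ 𝓝 x) : HasDerivAt f (derivWithin f s x) x := by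
  rw [derivWithin_of_mem_nhds hs]
  exact ((hf x (mem_of_mem_nhds hs)).differentiableAt hs).hasDerivAt

theorem norm_le_norm_add_of_norm_derivWithin_le {E : Type*} [NormedAddCommGroup E]
    [NormedSpace ℝ E] {f : ℝ → E} {a b C s : ℝ} (hf : DifferentiableOn ℝ f (Icc a b))
    (hC : ∀ x ∈ Icc a b, ‖derivWithin f (Icc a b) x‖ ≤ C) (hs : s ∈ Icc a b) :
    ‖f s‖ ≤ ‖f a‖ + C * (b - a) := by
  have hC₀ : 0 ≤ C := (norm_nonneg _).trans (hC s hs)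
  have hmvt := norm_image_sub_le_of_norm_deriv_le_segment hf
    (fun x hx => hC x (Ico_subset_Icc_self hx)) s hs
  calc ‖f s‖ ≤ ‖f a‖ + ‖f s - f a‖ := norm_le_insert' _ _
    _ ≤ ‖f a‖ + C * (b - a) := by
      gcongr
      exact hmvt.trans (mul_le_mul_of_nonneg_left (by linarith [hs.2]) hC₀)

theorem hasDerivAt_cexp_mul_ofReal (c : ℂ) (s : ℝ) :
    HasDerivAt (fun s : ℝ => cexp (c * s)) (c * cexp (c * s)) s := by
  simpa [mul_comm] using ((hasDerivAt_id (s : ℂ)).const_mul c).cexp.comp_ofReal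

theorem cexp_mul_sub_eq_integral_of_hasDerivAt {F φ : ℝ → ℂ} {c : ℂ} {t : ℝ} (ht : 0 ≤ t)
    (hF : ContinuousOn F (Icc 0 t)) (hφ : ContinuousOn φ (Icc 0 t))
    (hF' : ∀ s ∈ Ioo 0 t, HasDerivAt F (φ s - c * F s) s) :
    cexp (c * t) * F t - F 0 = ∫ s in (0:ℝ)..t, cexp (c * s) * φ s := by
  have hexp_cont : Continuous fun s : ℝ => cexp (c * s) := by fun_prop
  have hderiv : ∀ s ∈ Ioo 0 t,
      HasDerivAt (fun s : ℝ => cexp (c * s) * F s) (cexp (c * s) * φ s) s := fun s hs =>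
    ((hasDerivAt_cexp_mul_ofReal c s).mul (hF' s hs)).congr_deriv (by ring)
  symm
  simpa using integral_eq_sub_of_hasDeriv_right_of_le ht (hexp_cont.continuousOn.mul hF)
    (fun s hs => (hderiv s hs).hasDerivWithinAt)
    ((hexp_cont.continuousOn.mul hφ).intervalIntegrable_of_Icc ht)

noncomputable def halfLineFourier (k : ℂ) (f : ℝ → ℂ) : ℂ :=
  ∫ x in Ici (0:ℝ), cexp (-I * k * x) * f x

section HalfLineFourier

variable {k : ℂ}

theorem norm_cexp_neg_I_mul_le_one (hk : k.im ≤ 0) {x : ℝ} (hx : 0 ≤ x) :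
    ‖cexp (-I * k * x)‖ ≤ 1 := by
  rw [norm_exp, Real.exp_le_one_iff]
  simpa [mul_re, mul_im] using mul_nonpos_of_nonpos_of_nonneg hk hx

theorem norm_cexp_neg_I_mul_mul_le (hk : k.im ≤ 0) {x : ℝ} (hx : 0 ≤ x) (z : ℂ) :
    ‖cexp (-I * k * x) * z‖ ≤ ‖z‖ := by
  rw [norm_mul]
  exact mul_le_of_le_one_left (norm_nonneg z) (norm_cexp_neg_I_mul_le_one hk hx)

theorem MeasureTheory.IntegrableOn.cexp_neg_I_mul (hk : k.im ≤ 0) {f : ℝ → ℂ}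
    (hf : IntegrableOn f (Ici 0)) :
    IntegrableOn (fun x : ℝ => cexp (-I * k * x) * f x) (Ici 0) :=
  hf.bdd_mul (by fun_prop) <| (ae_restrict_mem measurableSet_Ici).mono
    fun _ hx => norm_cexp_neg_I_mul_le_one hk hx

theorem halfLineFourier_congr {f g : ℝ → ℂ} (h : EqOn f g (Ici 0)) :
    halfLineFourier k f = halfLineFourier k g :=
  setIntegral_congr_fun measurableSet_Ici fun x hx => by rw [h hx]

theorem halfLineFourier_const_mul (c : ℂ) (f : ℝ → ℂ) :
    halfLineFourier k (fun x => c * f x) = c * halfLineFourier k f := by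
  simp only [halfLineFourier, mul_left_comm _ c, MeasureTheory.integral_const_mul]

theorem halfLineFourier_of_hasDerivAt (hk : k.im ≤ 0) {f f' : ℝ → ℂ}
    (hf₀ : ContinuousWithinAt f (Ici 0) 0) (hf : ∀ x ∈ Ioi (0:ℝ), HasDerivAt f (f' x) x)
    (hf_int : IntegrableOn f (Ici 0)) (hf'_int : IntegrableOn f' (Ici 0))
    (hf_top : Tendsto f atTop (𝓝 0)) :
    halfLineFourier k f' = -f 0 + I * k * halfLineFourier k f := by
  set e : ℝ → ℂ := fun x => cexp (-I * k * x)
  have he_cont : Continuous e := by fun_prop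
  have h_zero : Tendsto (e * f) (𝓝[>] 0) (𝓝 (e 0 * f 0)) :=
    ((he_cont.continuousWithinAt.mul hf₀).mono Ioi_subset_Ici_self).tendsto
  have h_top : Tendsto (e * f) atTop (𝓝 0) := by
    refine squeeze_zero_norm' ?_ (by simpa using hf_top.norm)
    filter_upwards [eventually_ge_atTop 0] with x hx
    exact norm_cexp_neg_I_mul_mul_le hk hx (f x)
  have he'f_int : IntegrableOn (fun x => -I * k * e x * f x) (Ioi 0) :=
    (IntegrableOn.mono_set ((hf_int.cexp_neg_I_mul hk).const_mul (-I * k))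
      Ioi_subset_Ici_self).congr_fun (fun x _ => by ring) measurableSet_Ioi
  have hibp := integral_Ioi_mul_deriv_eq_deriv_mul
    (fun x _ => hasDerivAt_cexp_mul_ofReal (-I * k) x) hf
    ((hf'_int.cexp_neg_I_mul hk).mono_set Ioi_subset_Ici_self) he'f_int h_zero h_top
  simp only [halfLineFourier, integral_Ici_eq_integral_Ioi]
  rw [hibp, show e 0 = 1 by simp [e]]
  simp_rw [mul_assoc (-I * k)]
  rw [MeasureTheory.integral_const_mul]
  ring

end HalfLineFourier

section Transport

variable {k : ℂ} {T : ℝ} {Ψ : ℝ × ℝ → ℂ} {g : ℝ → ℝ}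

theorem continuousOn_halfLineFourier_of_dominated (hk : k.im ≤ 0)
    (hΨ : ∀ x ∈ Ici (0:ℝ), DifferentiableOn ℝ (fun s => Ψ (x, s)) (Icc 0 T))
    (hint : ∀ s ∈ Icc (0:ℝ) T, IntegrableOn (fun x => Ψ (x, s)) (Ici 0))
    (hg : IntegrableOn g (Ici 0))
    (hgb : ∀ s ∈ Icc (0:ℝ) T, ∀ x ∈ Ici (0:ℝ),
      ‖derivWithin (fun r => Ψ (x, r)) (Icc 0 T) s‖ ≤ g x) :
    ContinuousOn (fun s => halfLineFourier k fun x => Ψ (x, s)) (Icc 0 T) := by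
  intro s hs
  have h0 : (0:ℝ) ∈ Icc 0 T := left_mem_Icc.2 (hs.1.trans hs.2)
  -- By the mean value theorem in time, `Ψ(x, ·)` is dominated by `‖Ψ(x, 0)‖ + T g(x)`.
  refine continuousOn_of_dominated (bound := fun x => ‖Ψ (x, 0)‖ + g x * (T - 0))
    (fun σ hσ => ((hint σ hσ).cexp_neg_I_mul hk).aestronglyMeasurable) (fun σ hσ => ?_)
    ((hint 0 h0).norm.add (hg.mul_const _)) ?_ s hs
  · filter_upwards [ae_restrict_mem measurableSet_Ici] with x hx
    exact (norm_cexp_neg_I_mul_mul_le hk hx _).trans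
      (norm_le_norm_add_of_norm_derivWithin_le (hΨ x hx) (fun r hr => hgb r hr x hx) hσ)
  · filter_upwards [ae_restrict_mem measurableSet_Ici] with x hx
    exact continuousOn_const.mul (hΨ x hx).continuousOn

theorem hasDerivAt_halfLineFourier_of_dominated (hk : k.im ≤ 0) {s : ℝ} (hs : s ∈ Ioo 0 T)
    (hΨ : ∀ x ∈ Ici (0:ℝ), DifferentiableOn ℝ (fun s => Ψ (x, s)) (Icc 0 T))
    (hint : ∀ s ∈ Icc (0:ℝ) T, IntegrableOn (fun x => Ψ (x, s)) (Ici 0))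
    (hmeas : AEStronglyMeasurable (fun x => derivWithin (fun r => Ψ (x, r)) (Icc 0 T) s)
      (volume.restrict (Ici 0)))
    (hg : IntegrableOn g (Ici 0))
    (hgb : ∀ s ∈ Icc (0:ℝ) T, ∀ x ∈ Ici (0:ℝ),
      ‖derivWithin (fun r => Ψ (x, r)) (Icc 0 T) s‖ ≤ g x) :
    HasDerivAt (fun σ => halfLineFourier k fun x => Ψ (x, σ))
      (halfLineFourier k fun x => derivWithin (fun r => Ψ (x, r)) (Icc 0 T) s) s := by
  refine (hasDerivAt_integral_of_dominated_loc_of_deriv_le (bound := g)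
    (F := fun σ x => cexp (-I * k * x) * Ψ (x, σ))
    (F' := fun σ x => cexp (-I * k * x) * derivWithin (fun r => Ψ (x, r)) (Icc 0 T) σ)
    (Ioo_mem_nhds hs.1 hs.2) ?_ ((hint s (Ioo_subset_Icc_self hs)).cexp_neg_I_mul hk)
    ((Continuous.aestronglyMeasurable (by fun_prop)).mul hmeas) ?_ hg ?_).2
  · filter_upwards [Icc_mem_nhds hs.1 hs.2] with σ hσ
    exact ((hint σ hσ).cexp_neg_I_mul hk).aestronglyMeasurable
  · filter_upwards [ae_restrict_mem measurableSet_Ici] with x hx σ hσ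
    exact (norm_cexp_neg_I_mul_mul_le hk hx _).trans (hgb σ (Ioo_subset_Icc_self hσ) x hx)
  · filter_upwards [ae_restrict_mem measurableSet_Ici] with x hx σ hσ
    exact ((hΨ x hx).hasDerivAt_derivWithin (Icc_mem_nhds hσ.1 hσ.2)).const_mul _

theorem halfLineFourier_transport_relation (ε : ℂ) (hk : k.im ≤ 0)
    (hΨ : DifferentiableOn ℝ Ψ (Ici 0 ×ˢ Icc 0 T))
    (pde : ∀ x ∈ Ici (0:ℝ), ∀ t ∈ Icc (0:ℝ) T,
      derivWithin (fun s => Ψ (x, s)) (Icc 0 T) t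
        + ε * derivWithin (fun y => Ψ (y, t)) (Ici 0) x = 0)
    (hint : ∀ s ∈ Icc (0:ℝ) T,
      IntegrableOn (fun x => Ψ (x, s)) (Ici 0) ∧
      IntegrableOn (fun x => derivWithin (fun y => Ψ (y, s)) (Ici 0) x) (Ici 0))
    (hdecay : ∀ s ∈ Icc (0:ℝ) T, Tendsto (fun x => Ψ (x, s)) atTop (𝓝 0))
    (hg : IntegrableOn g (Ici 0))
    (hgb : ∀ s ∈ Icc (0:ℝ) T, ∀ x ∈ Ici (0:ℝ),
      ‖derivWithin (fun r => Ψ (x, r)) (Icc 0 T) s‖ ≤ g x)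
    {t : ℝ} (ht : t ∈ Icc 0 T) :
    halfLineFourier k (fun x => Ψ (x, 0))
      - cexp (ε * I * k * t) * halfLineFourier k (fun x => Ψ (x, t))
      + ε * ∫ s in (0:ℝ)..t, cexp (ε * I * k * s) * Ψ (0, s) = 0 := by
  set F : ℝ → ℂ := fun s => halfLineFourier k fun x => Ψ (x, s)
  have hΨt : ∀ x ∈ Ici (0:ℝ), DifferentiableOn ℝ (fun s => Ψ (x, s)) (Icc 0 T) :=
    fun x hx => hΨ.comp_prodMk_const_left hx
  have hFourier_dx : ∀ s ∈ Icc (0:ℝ) T,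
      halfLineFourier k (fun x => derivWithin (fun y => Ψ (y, s)) (Ici 0) x)
        = -Ψ (0, s) + I * k * F s := fun s hs =>
    have hΨx := hΨ.comp_prodMk_const_right hs
    halfLineFourier_of_hasDerivAt hk (hΨx.continuousOn 0 self_mem_Ici)
      (fun x hx => hΨx.hasDerivAt_derivWithin (Ici_mem_nhds hx)) (hint s hs).1 (hint s hs).2
      (hdecay s hs)
  have hF' : ∀ s ∈ Ioo 0 t, HasDerivAt F (ε * Ψ (0, s) - ε * I * k * F s) s := by
    intro s hs
    have hsT : s ∈ Ioo 0 T := ⟨hs.1, hs.2.trans_le ht.2⟩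
    have hs' := Ioo_subset_Icc_self hsT
    have hdt : EqOn (fun x => derivWithin (fun r => Ψ (x, r)) (Icc 0 T) s)
        (fun x => -ε * derivWithin (fun y => Ψ (y, s)) (Ici 0) x) (Ici 0) := fun x hx => by
      linear_combination pde x hx s hs'
    have hmeas := ((hint s hs').2.const_mul (-ε)).aestronglyMeasurable.congr
      ((ae_restrict_mem measurableSet_Ici).mono fun x hx => (hdt hx).symm)
    have hderiv := hasDerivAt_halfLineFourier_of_dominated hk hsT hΨt
      (fun σ hσ => (hint σ hσ).1) hmeas hg hgb
    rw [halfLineFourier_congr hdt, halfLineFourier_const_mul, hFourier_dx s hs'] at hderiv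
    exact hderiv.congr_deriv (by ring)
  have hrel := cexp_mul_sub_eq_integral_of_hasDerivAt (c := ε * I * k)
    (φ := fun s => ε * Ψ (0, s)) ht.1
    ((continuousOn_halfLineFourier_of_dominated hk hΨt (fun σ hσ => (hint σ hσ).1) hg hgb).mono
      (Icc_subset_Icc_right ht.2))
    (continuousOn_const.mul ((hΨt 0 self_mem_Ici).continuousOn.mono (Icc_subset_Icc_right ht.2)))
    hF'
  simp_rw [mul_left_comm (cexp _) ε, intervalIntegral.integral_const_mul] at hrel
  linear_combination -hrel

end Transport

theorem massless_dirac_global_relations_pos_halfline_general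
    (T : ℝ)
    (Ψ₁ Ψ₂ : ℝ × ℝ → ℂ)
    (hΨ₁ : ContDiffOn ℝ 1 Ψ₁ (Set.Ici 0 ×ˢ Set.Icc 0 T))
    (hΨ₂ : ContDiffOn ℝ 1 Ψ₂ (Set.Ici 0 ×ˢ Set.Icc 0 T))
    (pde₁ : ∀ x ∈ Set.Ici (0:ℝ), ∀ t ∈ Set.Icc (0:ℝ) T,
        derivWithin (fun s : ℝ => Ψ₁ (x, s)) (Set.Icc 0 T) t
          + derivWithin (fun y : ℝ => Ψ₁ (y, t)) (Set.Ici 0) x = 0)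
    (pde₂ : ∀ x ∈ Set.Ici (0:ℝ), ∀ t ∈ Set.Icc (0:ℝ) T,
        derivWithin (fun s : ℝ => Ψ₂ (x, s)) (Set.Icc 0 T) t
          - derivWithin (fun y : ℝ => Ψ₂ (y, t)) (Set.Ici 0) x = 0)
    (hint : ∀ Ψ ∈ [Ψ₁, Ψ₂], ∀ s ∈ Set.Icc (0:ℝ) T,
        IntegrableOn (fun x => Ψ (x, s)) (Set.Ici 0) ∧
        IntegrableOn (fun x => derivWithin (fun y : ℝ => Ψ (y, s)) (Set.Ici 0) x)
          (Set.Ici 0))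
    (hdecay : ∀ Ψ ∈ [Ψ₁, Ψ₂], ∀ s ∈ Set.Icc (0:ℝ) T,
        Tendsto (fun x => Ψ (x, s)) atTop (nhds 0))
    (hdom : ∀ Ψ ∈ [Ψ₁, Ψ₂], ∃ g : ℝ → ℝ, IntegrableOn g (Set.Ici 0) ∧
        ∀ s ∈ Set.Icc (0:ℝ) T, ∀ x ∈ Set.Ici (0:ℝ),
          ‖derivWithin (fun r : ℝ => Ψ (x, r)) (Set.Icc 0 T) s‖ ≤ g x) :
    ∀ k : ℂ, k.im ≤ 0 → ∀ t ∈ Set.Icc (0:ℝ) T,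
      ((∫ x in Set.Ici (0:ℝ), Complex.exp (-Complex.I * k * x) * Ψ₁ (x, 0))
        - Complex.exp (Complex.I * k * t) *
            (∫ x in Set.Ici (0:ℝ), Complex.exp (-Complex.I * k * x) * Ψ₁ (x, t))
        + (∫ s in (0:ℝ)..t, Complex.exp (Complex.I * k * s) * Ψ₁ (0, s)) = 0) ∧
      ((∫ x in Set.Ici (0:ℝ), Complex.exp (-Complex.I * k * x) * Ψ₂ (x, 0))
        - Complex.exp (-Complex.I * k * t) *
            (∫ x in Set.Ici (0:ℝ), Complex.exp (-Complex.I * k * x) * Ψ₂ (x, t))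
        - (∫ s in (0:ℝ)..t, Complex.exp (-Complex.I * k * s) * Ψ₂ (0, s)) = 0) := by
  intro k hk t ht
  have mem₁ : Ψ₁ ∈ [Ψ₁, Ψ₂] := by simp
  have mem₂ : Ψ₂ ∈ [Ψ₁, Ψ₂] := by simp
  obtain ⟨g₁, hg₁, hgb₁⟩ := hdom Ψ₁ mem₁
  obtain ⟨g₂, hg₂, hgb₂⟩ := hdom Ψ₂ mem₂
  have rel₁ := halfLineFourier_transport_relation 1 hk (hΨ₁.differentiableOn one_ne_zero)
    (by simpa only [one_mul] using pde₁) (hint Ψ₁ mem₁) (hdecay Ψ₁ mem₁) hg₁ hgb₁ ht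
  have rel₂ := halfLineFourier_transport_relation (-1) hk (hΨ₂.differentiableOn one_ne_zero)
    (by simpa only [neg_one_mul, ← sub_eq_add_neg] using pde₂) (hint Ψ₂ mem₂) (hdecay Ψ₂ mem₂)
    hg₂ hgb₂ ht
  simp only [one_mul, neg_one_mul, ← sub_eq_add_neg] at rel₁ rel₂
  exact ⟨rel₁, rel₂⟩

/-- Global relations for the massless Dirac system (two decoupled transport equations)
on the positive half-line `[0,∞)` up to time `T`, valid for every `k ∈ ℂ` with
`Im k ≤ 0`. -/
theorem massless_dirac_global_relations_pos_halfline
    (T : ℝ) (hT : 0 < T)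
    (Ψ₁ Ψ₂ : ℝ × ℝ → ℂ)
    (hΨ₁ : ContDiffOn ℝ 1 Ψ₁ (Set.Ici 0 ×ˢ Set.Icc 0 T))
    (hΨ₂ : ContDiffOn ℝ 1 Ψ₂ (Set.Ici 0 ×ˢ Set.Icc 0 T))
    (pde₁ : ∀ x ∈ Set.Ici (0:ℝ), ∀ t ∈ Set.Icc (0:ℝ) T,
        derivWithin (fun s : ℝ => Ψ₁ (x, s)) (Set.Icc 0 T) t
          + derivWithin (fun y : ℝ => Ψ₁ (y, t)) (Set.Ici 0) x = 0)
    (pde₂ : ∀ x ∈ Set.Ici (0:ℝ), ∀ t ∈ Set.Icc (0:ℝ) T,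
        derivWithin (fun s : ℝ => Ψ₂ (x, s)) (Set.Icc 0 T) t
          - derivWithin (fun y : ℝ => Ψ₂ (y, t)) (Set.Ici 0) x = 0)
    (hint : ∀ Ψ ∈ [Ψ₁, Ψ₂], ∀ s ∈ Set.Icc (0:ℝ) T,
        IntegrableOn (fun x => Ψ (x, s)) (Set.Ici 0) ∧
        IntegrableOn (fun x => derivWithin (fun y : ℝ => Ψ (y, s)) (Set.Ici 0) x)
          (Set.Ici 0))
    (hdecay : ∀ Ψ ∈ [Ψ₁, Ψ₂], ∀ s ∈ Set.Icc (0:ℝ) T,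
        Tendsto (fun x => Ψ (x, s)) atTop (nhds 0))
    (hdom : ∀ Ψ ∈ [Ψ₁, Ψ₂], ∃ g : ℝ → ℝ, IntegrableOn g (Set.Ici 0) ∧
        ∀ s ∈ Set.Icc (0:ℝ) T, ∀ x ∈ Set.Ici (0:ℝ),
          ‖derivWithin (fun r : ℝ => Ψ (x, r)) (Set.Icc 0 T) s‖ ≤ g x) :
    ∀ k : ℂ, k.im ≤ 0 → ∀ t ∈ Set.Icc (0:ℝ) T,
      ((∫ x in Set.Ici (0:ℝ), Complex.exp (-Complex.I * k * x) * Ψ₁ (x, 0))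
        - Complex.exp (Complex.I * k * t) *
            (∫ x in Set.Ici (0:ℝ), Complex.exp (-Complex.I * k * x) * Ψ₁ (x, t))
        + (∫ s in (0:ℝ)..t, Complex.exp (Complex.I * k * s) * Ψ₁ (0, s)) = 0) ∧
      ((∫ x in Set.Ici (0:ℝ), Complex.exp (-Complex.I * k * x) * Ψ₂ (x, 0))
        - Complex.exp (-Complex.I * k * t) *
            (∫ x in Set.Ici (0:ℝ), Complex.exp (-Complex.I * k * x) * Ψ₂ (x, t))
        - (∫ s in (0:ℝ)..t, Complex.exp (-Complex.I * k * s) * Ψ₂ (0, s)) = 0) :=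
  massless_dirac_global_relations_pos_halfline_general T Ψ₁ Ψ₂ hΨ₁ hΨ₂ pde₁ pde₂ hint hdecay hdom
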